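/- arXiv:1907.04027 — 2 statements merged into one kernel-verified Lean document; each statement's English description precedes it below -/
import Mathlib

section
/- Fix data (y_i,x_i)_{i=1}^n and tau > 0. Let S, E be subsets of {1,...,d} with S contained in E, |E| = k, |S| = s >= 1, and let beta in R^d satisfy beta_j = 0 for j not in S. Let g in R^d; set w = grad L_hat_tau(beta) - g, b = ||g||_2. Let lambda in R^d have nonnegative entries with ||lambda||_inf <= lambda_0 and min_{j not in E} lambda_j >= rho*lambda_0 for some rho in (0,1], and assume lambda_0 >= b/sqrt(s). Let eps > 0 satisfy ||w||_inf + eps <= 0.5*rho*lambda_0, and set l = (2 + 2/rho)*sqrt(k) + (2/rho)*sqrt(s). Then: (i) every eps-optimal solution beta_tilde of min_{beta'} { L_hat_tau(beta') + ||lambda o beta'||_1 } satisfies beta_tilde - beta in C(l). Moreover, if r, kappa > 0 satisfy r > kappa^{-1}*(0.5*rho*sqrt(k) + 2*sqrt(s))*lambda_0 and the restricted strong convexity holds, i.e. for every beta' in beta + B(r) inter C(l) with beta' != beta: <grad L_hat_tau(beta') - grad L_hat_tau(beta), beta' - beta> >= kappa*||beta' - beta||_2^2, then (ii) ||beta_tilde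 - beta||_2 <= kappa^{-1}*( ||lambda_S||_2 + ||w_E||_2 + sqrt(k)*eps + b ) <= kappa^{-1}*(0.5*rho*sqrt(k) + 2*sqrt(s))*lambda_0 < r. -/
set_option autoImplicit false

open MeasureTheory ProbabilityTheory Filter

noncomputable section

/-- The Huber loss with robustification parameter `τ`. -/
def huber (τ x : ℝ) : ℝ := if |x| ≤ τ then x ^ 2 / 2 else τ * |x| - τ ^ 2 / 2

/-- The derivative of the Huber loss. -/
def huberDeriv (τ x : ℝ) : ℝ := if |x| ≤ τ then x else τ * Real.sign x

/-- Empirical Huber loss `L̂_τ(β) = n⁻¹ ∑ᵢ ℓ_τ(yᵢ - ⟨xᵢ, β⟩)`. -/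
def empLoss {n d : ℕ} (y : Fin n → ℝ) (X : Fin n → Fin d → ℝ) (τ : ℝ)
    (β : Fin d → ℝ) : ℝ :=
  (n : ℝ)⁻¹ * ∑ i, huber τ (y i - ∑ j, X i j * β j)

/-- Gradient of the empirical Huber loss:
`∇L̂_τ(β) = -n⁻¹ ∑ᵢ ℓ'_τ(yᵢ - ⟨xᵢ, β⟩) xᵢ`. -/
def empGrad {n d : ℕ} (y : Fin n → ℝ) (X : Fin n → Fin d → ℝ) (τ : ℝ)
    (β : Fin d → ℝ) : Fin d → ℝ :=
  fun j => -(n : ℝ)⁻¹ * ∑ i, huberDeriv τ (y i - ∑ j', X i j' * β j') * X i j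

/-- ℓ¹ norm on `Fin d → ℝ`. -/
def norm1 {d : ℕ} (v : Fin d → ℝ) : ℝ := ∑ j, |v j|

/-- Euclidean (ℓ²) norm on `Fin d → ℝ`. -/
def norm2 {d : ℕ} (v : Fin d → ℝ) : ℝ := Real.sqrt (∑ j, v j ^ 2)

/-- Sup (ℓ^∞) norm on `Fin d → ℝ`. -/
def normInf {d : ℕ} (v : Fin d → ℝ) : ℝ := ⨆ j, |v j|

/-- The subdifferential of the ℓ¹ norm at `β`. -/
def l1Subdiff {d : ℕ} (β : Fin d → ℝ) : Set (Fin d → ℝ) :=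
  {ξ | ∀ j, if β j = 0 then ξ j ∈ Set.Icc (-1 : ℝ) 1 else ξ j = Real.sign (β j)}

/-- `β` is an `ε`-optimal solution of `min L̂_τ + ‖lam ∘ ·‖₁`:  the suboptimality
measure `ω_lam(β) = min_{ξ ∈ ∂‖β‖₁} ‖∇L̂_τ(β) + lam ∘ ξ‖_∞` is at most `ε`. -/
def IsEpsOptimal {n d : ℕ} (y : Fin n → ℝ) (X : Fin n → Fin d → ℝ) (τ : ℝ)
    (lam : Fin d → ℝ) (ε : ℝ) (β : Fin d → ℝ) : Prop :=
  ∃ ξ ∈ l1Subdiff β, normInf (fun j => empGrad y X τ β j + lam j * ξ j) ≤ ε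


/-!
Write `δ = β̃ - β`, `u = ∇L̂(β̃) + λ ∘ ξ` (so `‖u‖_∞ ≤ ε`) and `w = ∇L̂(β) - g`, so that
`⟨∇L̂(β̃) - ∇L̂(β), δ⟩ = ⟨u - λ ∘ ξ - w, δ⟩ - ⟨g, δ⟩`. Off `E` the vector `β` vanishes, so
`λⱼ ξⱼ δⱼ = λⱼ |δⱼ| ≥ ρ λ₀ |δⱼ|`, which dominates the `(ρ λ₀ / 2) |δⱼ|` contributed by `u` and `w`.

(i) The Huber derivative is a clamp, hence nondecreasing, so `∇L̂` is a monotone operator and the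
left side is nonnegative; this bounds `‖δ_{Eᶜ}‖₁` by `‖δ_E‖₁ ≤ √k ‖δ‖₂` and `‖g‖₂ ≤ √s λ₀`.

(ii) Coordinatewise bounds and Cauchy–Schwarz give `⟨∇L̂(β̃) - ∇L̂(β), δ⟩ ≤ U ‖δ‖₂`. If `‖δ‖₂ ≤ r`,
restricted strong convexity yields `κ ‖δ‖₂ ≤ U`. Otherwise apply it at `β + t δ`, `t = r / ‖δ‖₂`,
which stays in the cone: for a monotone operator `t ↦ ⟨∇L̂(β + t δ) - ∇L̂(β), δ⟩` is nondecreasing,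
so `κ r ≤ U`, contradicting `U / κ < r`.
-/

section HuberLoss

open Matrix

lemma huberDeriv_eq_max_min {τ : ℝ} (hτ : 0 ≤ τ) (x : ℝ) :
    huberDeriv τ x = max (-τ) (min τ x) := by
  unfold huberDeriv
  split_ifs with hx
  · rw [abs_le] at hx
    rw [min_eq_right hx.2, max_eq_right hx.1]
  · rcases lt_or_gt_of_ne (show x ≠ 0 by rintro rfl; simp [hτ] at hx) with h | h
    · rw [Real.sign_of_neg h, min_eq_right (by linarith), max_eq_left (by grind)]
      ring
    · rw [Real.sign_of_pos h, min_eq_left (by grind), max_eq_right (by linarith)]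
      ring

lemma huberDeriv_monotone {τ : ℝ} (hτ : 0 ≤ τ) : Monotone (huberDeriv τ) := fun a b hab => by
  simpa only [huberDeriv_eq_max_min hτ] using max_le_max le_rfl (min_le_min le_rfl hab)

lemma dotProduct_comp_sub_comp_nonneg {ι : Type*} [Fintype ι] {φ : ℝ → ℝ} (hφ : Monotone φ)
    (u v : ι → ℝ) : 0 ≤ (φ ∘ u - φ ∘ v) ⬝ᵥ (u - v) :=
  Finset.sum_nonneg fun i _ => by
    rcases le_total (u i) (v i) with h | h
    · exact mul_nonneg_of_nonpos_of_nonpos (sub_nonpos.2 (hφ h)) (sub_nonpos.2 h)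
    · exact mul_nonneg (sub_nonneg.2 (hφ h)) (sub_nonneg.2 h)

lemma empGrad_eq_vecMul {n d : ℕ} (y : Fin n → ℝ) (X : Fin n → Fin d → ℝ) (τ : ℝ)
    (β : Fin d → ℝ) :
    empGrad y X τ β = -(n : ℝ)⁻¹ • (huberDeriv τ ∘ (y - of X *ᵥ β)) ᵥ* of X := by
  ext j
  simp [empGrad, vecMul, dotProduct, mulVec, mul_comm]

lemma empGrad_monotone {n d : ℕ} (y : Fin n → ℝ) (X : Fin n → Fin d → ℝ) {τ : ℝ} (hτ : 0 ≤ τ)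
    (a b : Fin d → ℝ) : 0 ≤ (empGrad y X τ a - empGrad y X τ b) ⬝ᵥ (a - b) := by
  have hres : of X *ᵥ (a - b) = (y - of X *ᵥ b) - (y - of X *ᵥ a) := by
    rw [mulVec_sub]; abel
  rw [empGrad_eq_vecMul, empGrad_eq_vecMul, ← smul_sub, ← sub_vecMul, smul_dotProduct,
    ← dotProduct_mulVec, hres, smul_eq_mul, neg_mul, ← mul_neg, ← dotProduct_neg, neg_sub]
  exact mul_nonneg (by positivity) (dotProduct_comp_sub_comp_nonneg (huberDeriv_monotone hτ) _ _)

end HuberLoss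

section Norms

variable {d : ℕ}

lemma norm2_nonneg (v : Fin d → ℝ) : 0 ≤ norm2 v := Real.sqrt_nonneg _

lemma norm2_smul (t : ℝ) (v : Fin d → ℝ) : norm2 (t • v) = |t| * norm2 v := by
  simp only [norm2, Pi.smul_apply, smul_eq_mul, mul_pow, ← Finset.mul_sum]
  rw [Real.sqrt_mul (sq_nonneg t), Real.sqrt_sq_eq_abs]

lemma norm2_abs (v : Fin d → ℝ) : norm2 (fun j => |v j|) = norm2 v := by
  simp only [norm2, sq_abs]

lemma norm1_smul (t : ℝ) (v : Fin d → ℝ) : norm1 (t • v) = |t| * norm1 v := by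
  simp only [norm1, Pi.smul_apply, smul_eq_mul, abs_mul, ← Finset.mul_sum]

lemma norm1_eq_sum_compl_add_sum (v : Fin d → ℝ) (A : Finset (Fin d)) :
    norm1 v = ∑ j ∈ Aᶜ, |v j| + ∑ j ∈ A, |v j| :=
  (Finset.sum_compl_add_sum A _).symm

lemma sum_mul_le_sqrt_mul_norm2 (A : Finset (Fin d)) (a b : Fin d → ℝ) :
    ∑ j ∈ A, a j * b j ≤ √(∑ j ∈ A, a j ^ 2) * norm2 b := by
  refine (Real.sum_mul_le_sqrt_mul_sqrt A a b).trans (mul_le_mul_of_nonneg_left ?_ (by positivity))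
  exact Real.sqrt_le_sqrt (Finset.sum_le_sum_of_subset_of_nonneg (Finset.subset_univ A)
    fun j _ _ => sq_nonneg _)

lemma sum_mul_abs_le_sqrt_mul_norm2 (A : Finset (Fin d)) (a b : Fin d → ℝ) :
    ∑ j ∈ A, a j * |b j| ≤ √(∑ j ∈ A, a j ^ 2) * norm2 b := by
  simpa only [norm2_abs] using sum_mul_le_sqrt_mul_norm2 A a fun j => |b j|

lemma sum_abs_le_sqrt_card_mul_norm2 (A : Finset (Fin d)) (b : Fin d → ℝ) :
    ∑ j ∈ A, |b j| ≤ √(A.card : ℝ) * norm2 b := by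
  simpa using sum_mul_abs_le_sqrt_mul_norm2 A 1 b

lemma neg_dotProduct_le_norm2_mul (g v : Fin d → ℝ) : -(g ⬝ᵥ v) ≤ norm2 g * norm2 v := by
  simpa [dotProduct, norm2] using sum_mul_le_sqrt_mul_norm2 Finset.univ (-g) v

lemma sqrt_sum_sq_le_sqrt_card_mul {ι : Type*} (A : Finset ι) {v : ι → ℝ} {c : ℝ} (hc : 0 ≤ c)
    (hv : ∀ j ∈ A, |v j| ≤ c) : √(∑ j ∈ A, v j ^ 2) ≤ √(A.card : ℝ) * c := by
  rw [← Real.sqrt_sq hc, ← Real.sqrt_mul (Nat.cast_nonneg _), ← nsmul_eq_mul, ← Finset.sum_const]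
  exact Real.sqrt_le_sqrt (Finset.sum_le_sum fun j hj => sq_le_sq' (abs_le.1 (hv j hj)).1
    (abs_le.1 (hv j hj)).2)

lemma normInf_nonneg (v : Fin d → ℝ) : 0 ≤ normInf v :=
  Real.iSup_nonneg fun _ => abs_nonneg _

lemma abs_le_normInf (v : Fin d → ℝ) (j : Fin d) : |v j| ≤ normInf v :=
  le_ciSup (f := fun j => |v j|) (Set.finite_range _).bddAbove j

lemma abs_le_one_of_mem_l1Subdiff {b ξ : Fin d → ℝ} (hξ : ξ ∈ l1Subdiff b) (j : Fin d) :
    |ξ j| ≤ 1 := by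
  have h := hξ j
  split_ifs at h with hb
  · exact abs_le.2 h
  · rw [h]
    rcases Ne.lt_or_gt hb with h' | h'
    · simp [Real.sign_of_neg h']
    · simp [Real.sign_of_pos h']

lemma mul_eq_abs_of_mem_l1Subdiff {b ξ : Fin d → ℝ} (hξ : ξ ∈ l1Subdiff b) (j : Fin d) :
    ξ j * b j = |b j| := by
  have h := hξ j
  split_ifs at h with hb
  · simp [hb]
  · rw [h]
    rcases Ne.lt_or_gt hb with h' | h'
    · simp [Real.sign_of_neg h', abs_of_neg h']
    · simp [Real.sign_of_pos h', abs_of_pos h']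

lemma neg_mul_le_abs_of_mem_l1Subdiff {b ξ : Fin d → ℝ} (hξ : ξ ∈ l1Subdiff b) (j : Fin d)
    (x : ℝ) : -(ξ j * x) ≤ |x| :=
  (neg_le_abs _).trans (abs_mul (ξ j) x ▸
    mul_le_of_le_one_left (abs_nonneg x) (abs_le_one_of_mem_l1Subdiff hξ j))

end Norms

lemma mul_le_mul_abs_of_abs_le {a c : ℝ} (h : |a| ≤ c) (x : ℝ) : a * x ≤ c * |x| :=
  (le_abs_self _).trans (abs_mul a x ▸ mul_le_mul_of_nonneg_right h (abs_nonneg x))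

section MonotoneOperator

lemma sub_dotProduct_smul_le {ι : Type*} [Fintype ι] {G : (ι → ℝ) → ι → ℝ}
    (hG : ∀ a b, 0 ≤ (G a - G b) ⬝ᵥ (a - b)) (β δ : ι → ℝ) {t : ℝ} (ht : t < 1) :
    (G (β + t • δ) - G β) ⬝ᵥ δ ≤ (G (β + δ) - G β) ⬝ᵥ δ := by
  have h := hG (β + δ) (β + t • δ)
  rw [show β + δ - (β + t • δ) = (1 - t) • δ by module, dotProduct_smul, smul_eq_mul,
    mul_nonneg_iff_of_pos_left (sub_pos.2 ht), sub_dotProduct] at h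
  rw [sub_dotProduct, sub_dotProduct]
  linarith

theorem norm2_sub_le_of_restricted_strong_monotone {d : ℕ} {G : (Fin d → ℝ) → Fin d → ℝ}
    (hG : ∀ a b, 0 ≤ (G a - G b) ⬝ᵥ (a - b))
    {β βt : Fin d → ℝ} {l r κ U : ℝ} (hκ : 0 < κ) (hU : 0 ≤ U) (hUr : κ⁻¹ * U < r)
    (hRSC : ∀ β', β' ≠ β → norm2 (β' - β) ≤ r → norm1 (β' - β) ≤ l * norm2 (β' - β) →
      κ * norm2 (β' - β) ^ 2 ≤ (G β' - G β) ⬝ᵥ (β' - β))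
    (hcone : norm1 (βt - β) ≤ l * norm2 (βt - β))
    (hinner : (G βt - G β) ⬝ᵥ (βt - β) ≤ U * norm2 (βt - β)) :
    norm2 (βt - β) ≤ κ⁻¹ * U := by
  rcases (norm2_nonneg (βt - β)).eq_or_lt with hN | hN
  · rw [← hN]; positivity
  have hne : ∀ {v : Fin d → ℝ}, 0 < norm2 v → β + v ≠ β := fun hv h => by
    simp [add_eq_left.1 h, norm2] at hv
  rw [le_inv_mul_iff₀ hκ]
  by_cases hNr : norm2 (βt - β) ≤ r
  · have h := hRSC βt (by simpa using hne hN) hNr hcone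
    nlinarith
  · exfalso
    rw [not_le] at hNr
    have hr : 0 < r := lt_of_le_of_lt (by positivity) hUr
    set t := r / norm2 (βt - β)
    have ht : 0 < t := div_pos hr hN
    have htN : t * norm2 (βt - β) = r := div_mul_cancel₀ r hN.ne'
    have hnorm : norm2 (t • (βt - β)) = r := by rw [norm2_smul, abs_of_pos ht, htN]
    have h := hRSC (β + t • (βt - β)) (hne (hnorm ▸ hr)) (by simp [hnorm])
      (by rw [add_sub_cancel_left, norm1_smul, norm2_smul, abs_of_pos ht]; nlinarith)
    rw [add_sub_cancel_left, hnorm, dotProduct_smul, smul_eq_mul] at h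
    have hray := sub_dotProduct_smul_le hG β (βt - β) ((div_lt_one hN).2 hNr)
    rw [add_sub_cancel] at hray
    rw [inv_mul_lt_iff₀ hκ] at hUr
    nlinarith

end MonotoneOperator

section ApproximateStationarity

variable {d : ℕ} {G : (Fin d → ℝ) → Fin d → ℝ} {S E : Finset (Fin d)}
  {β βt ξ lam g : Fin d → ℝ} {ε ρ lam0 : ℝ}

lemma sub_dotProduct_eq_sum_sub (a b g v : Fin d → ℝ) :
    (a - b) ⬝ᵥ v = ∑ j, (a j - b j + g j) * v j - g ⬝ᵥ v := by
  simp only [dotProduct, ← Finset.sum_sub_distrib, Pi.sub_apply]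
  exact Finset.sum_congr rfl fun j _ => by ring

lemma residual_mul_le_cone (hξ : ξ ∈ l1Subdiff βt) (hβ : ∀ j ∉ E, β j = 0)
    (hlamnn : ∀ j, 0 ≤ lam j) (hlamle : ∀ j, lam j ≤ lam0)
    (hlamlow : ∀ j ∉ E, ρ * lam0 ≤ lam j) (hu : ∀ j, |G βt j + lam j * ξ j| ≤ ε)
    (hw : ∀ j, |G β j - g j| + ε ≤ ρ * lam0 / 2) (j : Fin d) :
    (G βt j - G β j + g j) * (βt j - β j) ≤
      if j ∈ E then (ρ / 2 + 1) * lam0 * |βt j - β j| else -(ρ / 2 * lam0 * |βt j - β j|) := by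
  set x := βt j - β j
  have hsplit : (G βt j - G β j + g j) * x =
      ((G βt j + lam j * ξ j) - (G β j - g j)) * x - lam j * (ξ j * x) := by ring
  have hdrift := mul_le_mul_abs_of_abs_le (c := ρ * lam0 / 2)
    ((abs_sub (G βt j + lam j * ξ j) (G β j - g j)).trans (by linarith [hu j, hw j])) x
  have hx := abs_nonneg x
  rw [hsplit]
  split_ifs with hj
  · have := mul_le_mul_of_nonneg_left (neg_mul_le_abs_of_mem_l1Subdiff hξ j x) (hlamnn j)
    nlinarith [hlamle j]
  · have hξx : ξ j * x = |x| := by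
      simp only [x, hβ j hj, sub_zero, mul_eq_abs_of_mem_l1Subdiff hξ j]
    rw [hξx]
    nlinarith [hlamlow j hj]

lemma residual_mul_le_error (hξ : ξ ∈ l1Subdiff βt) (hSE : S ⊆ E) (hβ : ∀ j ∉ S, β j = 0)
    (hlamnn : ∀ j, 0 ≤ lam j) (hlamlow : ∀ j ∉ E, ρ * lam0 ≤ lam j)
    (hu : ∀ j, |G βt j + lam j * ξ j| ≤ ε) (hw : ∀ j, |G β j - g j| + ε ≤ ρ * lam0 / 2)
    (j : Fin d) :
    (G βt j - G β j + g j) * (βt j - β j) ≤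
      (if j ∈ E then ε * |βt j - β j| - (G β j - g j) * (βt j - β j) else 0) +
        if j ∈ S then lam j * |βt j - β j| else 0 := by
  set x := βt j - β j
  have hsplit : (G βt j - G β j + g j) * x =
      (G βt j + lam j * ξ j) * x - (G β j - g j) * x - lam j * (ξ j * x) := by ring
  have hstat := mul_le_mul_abs_of_abs_le (hu j) x
  have hx := abs_nonneg x
  rw [hsplit]
  by_cases hjS : j ∈ S
  · have := mul_le_mul_of_nonneg_left (neg_mul_le_abs_of_mem_l1Subdiff hξ j x) (hlamnn j)
    simp only [hSE hjS, hjS, if_true]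
    linarith
  have hξx : ξ j * x = |x| := by
    simp only [x, hβ j hjS, sub_zero, mul_eq_abs_of_mem_l1Subdiff hξ j]
  simp only [hjS, if_false, add_zero, hξx]
  split_ifs with hjE
  · nlinarith [hlamnn j]
  · have hdrift := mul_le_mul_abs_of_abs_le (c := ρ * lam0 / 2)
      ((abs_sub (G βt j + lam j * ξ j) (G β j - g j)).trans (by linarith [hu j, hw j])) x
    have hρlam : 0 ≤ ρ * lam0 := by
      linarith [hw j, abs_nonneg (G β j - g j), (abs_nonneg _).trans (hu j)]
    nlinarith [hlamlow j hjE]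

theorem norm1_sub_le_of_monotone (hG : ∀ a b, 0 ≤ (G a - G b) ⬝ᵥ (a - b))
    (hξ : ξ ∈ l1Subdiff βt) (hβ : ∀ j ∉ E, β j = 0)
    (hlamnn : ∀ j, 0 ≤ lam j) (hlamle : ∀ j, lam j ≤ lam0)
    (hlamlow : ∀ j ∉ E, ρ * lam0 ≤ lam j) (hu : ∀ j, |G βt j + lam j * ξ j| ≤ ε)
    (hw : ∀ j, |G β j - g j| + ε ≤ ρ * lam0 / 2) (hρ : 0 < ρ) (hlam0 : 0 < lam0) {c : ℝ}
    (hg : norm2 g ≤ c * lam0) :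
    norm1 (βt - β) ≤ ((2 + 2 / ρ) * √(E.card : ℝ) + 2 / ρ * c) * norm2 (βt - β) := by
  set A := ∑ j ∈ Eᶜ, |βt j - β j|
  set B := ∑ j ∈ E, |βt j - β j|
  set N := norm2 (βt - β)
  have hres : ∑ j, (G βt j - G β j + g j) * (βt j - β j) ≤
      (ρ / 2 + 1) * lam0 * B - ρ / 2 * lam0 * A := by
    refine (Finset.sum_le_sum fun j _ =>
      residual_mul_le_cone hξ hβ hlamnn hlamle hlamlow hu hw j).trans_eq ?_
    rw [Finset.sum_ite, Finset.sum_neg_distrib, ← Finset.mul_sum, ← Finset.mul_sum]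
    simp [A, B, Finset.filter_notMem_eq_sdiff, ← Finset.compl_eq_univ_sdiff]
    ring
  have hmono := hG βt β
  rw [sub_dotProduct_eq_sum_sub _ _ g] at hmono
  simp only [Pi.sub_apply] at hmono
  have hgδ : -(g ⬝ᵥ (βt - β)) ≤ c * lam0 * N := (neg_dotProduct_le_norm2_mul g (βt - β)).trans
    (mul_le_mul_of_nonneg_right hg (norm2_nonneg _))
  have hB : B ≤ √(E.card : ℝ) * N := sum_abs_le_sqrt_card_mul_norm2 E (βt - β)
  have hAB : ρ / 2 * A ≤ (ρ / 2 + 1) * B + c * N := by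
    refine le_of_mul_le_mul_left ?_ hlam0
    nlinarith
  rw [norm1_eq_sum_compl_add_sum _ E]
  simp only [Pi.sub_apply]
  refine le_of_mul_le_mul_left ?_ hρ
  have : ρ * (((2 + 2 / ρ) * √(E.card : ℝ) + 2 / ρ * c) * N) =
      (2 * ρ + 2) * (√(E.card : ℝ) * N) + 2 * (c * N) := by
    field_simp
  rw [this]
  nlinarith

theorem sub_dotProduct_sub_le (hξ : ξ ∈ l1Subdiff βt) (hSE : S ⊆ E) (hβ : ∀ j ∉ S, β j = 0)
    (hlamnn : ∀ j, 0 ≤ lam j) (hlamlow : ∀ j ∉ E, ρ * lam0 ≤ lam j)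
    (hu : ∀ j, |G βt j + lam j * ξ j| ≤ ε) (hw : ∀ j, |G β j - g j| + ε ≤ ρ * lam0 / 2)
    (hε : 0 ≤ ε) :
    (G βt - G β) ⬝ᵥ (βt - β) ≤ (√(∑ j ∈ S, lam j ^ 2) + √(∑ j ∈ E, (G β j - g j) ^ 2) +
      √(E.card : ℝ) * ε + norm2 g) * norm2 (βt - β) := by
  set N := norm2 (βt - β)
  have hres : ∑ j, (G βt j - G β j + g j) * (βt j - β j) ≤
      ε * ∑ j ∈ E, |βt j - β j| + ∑ j ∈ E, (-(G β j - g j)) * (βt j - β j) +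
        ∑ j ∈ S, lam j * |βt j - β j| := by
    refine (Finset.sum_le_sum fun j _ =>
      residual_mul_le_error hξ hSE hβ hlamnn hlamlow hu hw j).trans_eq ?_
    simp only [Finset.sum_add_distrib, Finset.sum_ite_mem, Finset.univ_inter,
      Finset.sum_sub_distrib, Finset.mul_sum, neg_mul, Finset.sum_neg_distrib]
    ring
  have hstat : ε * ∑ j ∈ E, |βt j - β j| ≤ ε * (√(E.card : ℝ) * N) :=
    mul_le_mul_of_nonneg_left (sum_abs_le_sqrt_card_mul_norm2 E (βt - β)) hε
  have hdrift := sum_mul_le_sqrt_mul_norm2 E (fun j => -(G β j - g j)) (βt - β)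
  have hpen := sum_mul_abs_le_sqrt_mul_norm2 S lam (βt - β)
  simp only [neg_sq, Pi.sub_apply] at hdrift hpen
  rw [sub_dotProduct_eq_sum_sub _ _ g]
  simp only [Pi.sub_apply]
  nlinarith [neg_dotProduct_le_norm2_mul g (βt - β)]

lemma error_terms_le (hlamnn : ∀ j, 0 ≤ lam j) (hlamle : ∀ j, lam j ≤ lam0) (hlam0 : 0 ≤ lam0)
    {w : Fin d → ℝ} (hw : ∀ j, |w j| + ε ≤ ρ * lam0 / 2) (hερ : ε ≤ ρ * lam0 / 2) {b : ℝ}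
    (hb : b ≤ √(S.card : ℝ) * lam0) :
    √(∑ j ∈ S, lam j ^ 2) + √(∑ j ∈ E, w j ^ 2) + √(E.card : ℝ) * ε + b ≤
      (0.5 * ρ * √(E.card : ℝ) + 2 * √(S.card : ℝ)) * lam0 := by
  have hlamS := sqrt_sum_sq_le_sqrt_card_mul S (v := lam) hlam0
    fun j _ => (abs_of_nonneg (hlamnn j)).trans_le (hlamle j)
  have hwE := sqrt_sum_sq_le_sqrt_card_mul E (sub_nonneg.2 hερ) (v := w)
    fun j _ => by linarith [hw j]
  nlinarith

end ApproximateStationarity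

theorem statement_11_general {n d : ℕ} (y : Fin n → ℝ) (X : Fin n → Fin d → ℝ)
    (τ : ℝ) (hτ : 0 < τ)
    (S E : Finset (Fin d)) (hSE : S ⊆ E) (k s : ℕ)
    (hk : E.card = k) (hcard : S.card = s) (hs : 1 ≤ s)
    (β : Fin d → ℝ) (hβ : ∀ j ∉ S, β j = 0)
    (g : Fin d → ℝ)
    (lam : Fin d → ℝ) (hlamnn : ∀ j, 0 ≤ lam j)
    (lam0 ρ : ℝ) (hρ : 0 < ρ)
    (hlamsup : normInf lam ≤ lam0)
    (hlammin : ρ * lam0 ≤ ⨅ j : {j : Fin d // j ∉ E}, lam (j : Fin d))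
    (hbias : norm2 g / Real.sqrt s ≤ lam0)
    (ε : ℝ) (hε : 0 < ε)
    (hεsmall : normInf (fun j' => empGrad y X τ β j' - g j') + ε ≤ 0.5 * ρ * lam0) :
    (∀ βt : Fin d → ℝ, IsEpsOptimal y X τ lam ε βt →
      norm1 (fun j => βt j - β j) ≤
        ((2 + 2 / ρ) * Real.sqrt k + (2 / ρ) * Real.sqrt s) *
          norm2 (fun j => βt j - β j)) ∧
    (∀ r κ : ℝ, 0 < κ →
      κ⁻¹ * (0.5 * ρ * Real.sqrt k + 2 * Real.sqrt s) * lam0 < r →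
      (∀ β' : Fin d → ℝ, β' ≠ β →
        norm2 (fun j => β' j - β j) ≤ r →
        norm1 (fun j => β' j - β j) ≤
          ((2 + 2 / ρ) * Real.sqrt k + (2 / ρ) * Real.sqrt s) *
            norm2 (fun j => β' j - β j) →
        κ * (norm2 (fun j => β' j - β j)) ^ 2 ≤
          ∑ j, (empGrad y X τ β' j - empGrad y X τ β j) * (β' j - β j)) →
      ∀ βt : Fin d → ℝ, IsEpsOptimal y X τ lam ε βt →
        norm2 (fun j => βt j - β j) ≤
            κ⁻¹ * (Real.sqrt (∑ j ∈ S, lam j ^ 2) +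
              Real.sqrt (∑ j ∈ E, (empGrad y X τ β j - g j) ^ 2) +
              Real.sqrt k * ε + norm2 g) ∧
          κ⁻¹ * (Real.sqrt (∑ j ∈ S, lam j ^ 2) +
              Real.sqrt (∑ j ∈ E, (empGrad y X τ β j - g j) ^ 2) +
              Real.sqrt k * ε + norm2 g) ≤
            κ⁻¹ * (0.5 * ρ * Real.sqrt k + 2 * Real.sqrt s) * lam0 ∧
          κ⁻¹ * (0.5 * ρ * Real.sqrt k + 2 * Real.sqrt s) * lam0 < r) := by
  subst hk hcard
  have hmono := empGrad_monotone y X hτ.le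
  have hW := normInf_nonneg fun j' => empGrad y X τ β j' - g j'
  have hw : ∀ j, |empGrad y X τ β j - g j| + ε ≤ ρ * lam0 / 2 := fun j => by
    linarith [abs_le_normInf (fun j' => empGrad y X τ β j' - g j') j]
  have hlam0 : 0 < lam0 := pos_of_mul_pos_right (a := ρ) (by linarith) hρ.le
  have hlamle : ∀ j, lam j ≤ lam0 := fun j =>
    (le_abs_self _).trans ((abs_le_normInf lam j).trans hlamsup)
  have hlamlow : ∀ j ∉ E, ρ * lam0 ≤ lam j := fun j hj =>
    hlammin.trans (ciInf_le ⟨0, by rintro _ ⟨i, rfl⟩; exact hlamnn i⟩ (⟨j, hj⟩ : {j // j ∉ E}))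
  have hg : norm2 g ≤ √(S.card : ℝ) * lam0 := by
    rwa [div_le_iff₀ (Real.sqrt_pos.2 (by exact_mod_cast hs)), mul_comm] at hbias
  have hcone : ∀ βt, IsEpsOptimal y X τ lam ε βt → _ := fun βt ⟨ξ, hξ, hu⟩ =>
    norm1_sub_le_of_monotone hmono hξ (fun j hj => hβ j fun h => hj (hSE h)) hlamnn hlamle
      hlamlow (fun j => (abs_le_normInf _ j).trans hu) hw hρ hlam0 hg
  refine ⟨hcone, fun r κ hκ hr hRSC βt hopt => ?_⟩
  have hδcone := hcone βt hopt
  obtain ⟨ξ, hξ, hu⟩ := hopt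
  have hmid : κ⁻¹ * (√(∑ j ∈ S, lam j ^ 2) + √(∑ j ∈ E, (empGrad y X τ β j - g j) ^ 2) +
      √(E.card : ℝ) * ε + norm2 g) ≤
      κ⁻¹ * (0.5 * ρ * √(E.card : ℝ) + 2 * √(S.card : ℝ)) * lam0 := by
    rw [mul_assoc]
    exact mul_le_mul_of_nonneg_left (error_terms_le hlamnn hlamle hlam0.le hw (by linarith) hg)
      (inv_nonneg.2 hκ.le)
  refine ⟨norm2_sub_le_of_restricted_strong_monotone hmono hκ
    (by have := norm2_nonneg g; positivity) (hmid.trans_lt hr) hRSC hδcone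
    (sub_dotProduct_sub_le hξ hSE hβ hlamnn hlamlow (fun j => (abs_le_normInf _ j).trans hu) hw
      hε.le), hmid, hr⟩

/-- Lemma A.3: (i) cone constraint and (ii) ℓ²-error bound for
`ε`-optimal solutions of the weighted ℓ¹-penalized empirical Huber loss. -/
theorem statement_11 {n d : ℕ} (y : Fin n → ℝ) (X : Fin n → Fin d → ℝ)
    (τ : ℝ) (hτ : 0 < τ)
    (S E : Finset (Fin d)) (hSE : S ⊆ E) (k s : ℕ)
    (hk : E.card = k) (hcard : S.card = s) (hs : 1 ≤ s)
    (β : Fin d → ℝ) (hβ : ∀ j ∉ S, β j = 0)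
    (g : Fin d → ℝ)
    (lam : Fin d → ℝ) (hlamnn : ∀ j, 0 ≤ lam j)
    (lam0 ρ : ℝ) (hρ : 0 < ρ) (hρ1 : ρ ≤ 1)
    (hlamsup : normInf lam ≤ lam0)
    (hlammin : ρ * lam0 ≤ ⨅ j : {j : Fin d // j ∉ E}, lam (j : Fin d))
    (hbias : norm2 g / Real.sqrt s ≤ lam0)
    (ε : ℝ) (hε : 0 < ε)
    (hεsmall : normInf (fun j' => empGrad y X τ β j' - g j') + ε ≤ 0.5 * ρ * lam0) :
    (∀ βt : Fin d → ℝ, IsEpsOptimal y X τ lam ε βt →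
      norm1 (fun j => βt j - β j) ≤
        ((2 + 2 / ρ) * Real.sqrt k + (2 / ρ) * Real.sqrt s) *
          norm2 (fun j => βt j - β j)) ∧
    (∀ r κ : ℝ, 0 < κ →
      κ⁻¹ * (0.5 * ρ * Real.sqrt k + 2 * Real.sqrt s) * lam0 < r →
      (∀ β' : Fin d → ℝ, β' ≠ β →
        norm2 (fun j => β' j - β j) ≤ r →
        norm1 (fun j => β' j - β j) ≤
          ((2 + 2 / ρ) * Real.sqrt k + (2 / ρ) * Real.sqrt s) *
            norm2 (fun j => β' j - β j) →
        κ * (norm2 (fun j => β' j - β j)) ^ 2 ≤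
          ∑ j, (empGrad y X τ β' j - empGrad y X τ β j) * (β' j - β j)) →
      ∀ βt : Fin d → ℝ, IsEpsOptimal y X τ lam ε βt →
        norm2 (fun j => βt j - β j) ≤
            κ⁻¹ * (Real.sqrt (∑ j ∈ S, lam j ^ 2) +
              Real.sqrt (∑ j ∈ E, (empGrad y X τ β j - g j) ^ 2) +
              Real.sqrt k * ε + norm2 g) ∧
          κ⁻¹ * (Real.sqrt (∑ j ∈ S, lam j ^ 2) +
              Real.sqrt (∑ j ∈ E, (empGrad y X τ β j - g j) ^ 2) +
              Real.sqrt k * ε + norm2 g) ≤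
            κ⁻¹ * (0.5 * ρ * Real.sqrt k + 2 * Real.sqrt s) * lam0 ∧
          κ⁻¹ * (0.5 * ρ * Real.sqrt k + 2 * Real.sqrt s) * lam0 < r) :=
  statement_11_general y X τ hτ S E hSE k s hk hcard hs β hβ g lam hlamnn lam0 ρ hρ hlamsup hlammin
    hbias ε hε hεsmall
end
end

section
/- Fix data (y_i,x_i)_{i=1}^n and tau > 0, let lambda in R^d have nonnegative entries, and set Psi(beta) = L_hat_tau(beta) + ||lambda o beta||_1. Let beta^{(0)} in R^d and, for j = 1,...,k, let phi^{(j)} > 0 and let beta^{(j)} be a minimizer of beta |-> F(beta; phi^{(j)}, beta^{(j-1)}) + ||lambda o beta||_1 satisfying F(beta^{(j)}; phi^{(j)}, beta^{(j-1)}) >= L_hat_tau(beta^{(j)}), where F(beta; phi, beta') = L_hat_tau(beta') + <grad L_hat_tau(beta'), beta - beta'> + (phi/2)*||beta - beta'||_2^2. Let beta_hat be a minimizer of Psi over R^d. Then Psi(beta^{(k)}) - Psi(beta_hat) <= ( max_{1<=j<=k} phi^{(j)} ) / (2k) * ||beta^{(0)} - beta_hat||_2^2. -/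
set_option autoImplicit false

open MeasureTheory ProbabilityTheory Filter

noncomputable section

/-- The isotropic quadratic majorant
`F(β; φ, β') = L̂_τ(β') + ⟨∇L̂_τ(β'), β - β'⟩ + (φ/2)‖β - β'‖₂²`. -/
def Fmaj {n d : ℕ} (y : Fin n → ℝ) (X : Fin n → Fin d → ℝ) (τ φ : ℝ)
    (βp β : Fin d → ℝ) : ℝ :=
  empLoss y X τ βp + (∑ j, empGrad y X τ βp j * (β j - βp j)) +
    φ / 2 * (norm2 (fun j => β j - βp j)) ^ 2

/-- Penalized objective `Ψ(β) = L̂_τ(β) + ‖lam ∘ β‖₁`. -/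
def Psi {n d : ℕ} (y : Fin n → ℝ) (X : Fin n → Fin d → ℝ) (τ : ℝ)
    (lam : Fin d → ℝ) (β : Fin d → ℝ) : ℝ :=
  empLoss y X τ β + ∑ j, lam j * |β j|

/-!
Each step is a proximal gradient step: `β⁽ʲ⁾` minimizes the linearization of `L̂_τ` at
`β⁽ʲ⁻¹⁾` plus `(φ⁽ʲ⁾/2)‖· - β⁽ʲ⁻¹⁾‖²` plus the convex penalty. Since the objective of that
subproblem is `φ⁽ʲ⁾`-strongly convex, its value at any `b` exceeds its minimum by at least
`(φ⁽ʲ⁾/2)‖b - β⁽ʲ⁾‖²`; combined with the majorization at `β⁽ʲ⁾` and the convexity of `L̂_τ`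
this gives `Ψ(β⁽ʲ⁾) - Ψ(b) ≤ (φ⁽ʲ⁾/2)(‖β⁽ʲ⁻¹⁾ - b‖² - ‖β⁽ʲ⁾ - b‖²)`. Taking `b = β⁽ʲ⁻¹⁾`
shows that `Ψ(β⁽ʲ⁾)` decreases, taking `b = β̂` and summing telescopes to
`k (Ψ(β⁽ᵏ⁾) - Ψ(β̂)) ≤ (max φ / 2) ‖β⁽⁰⁾ - β̂‖²`.
-/

open Set Topology
open scoped RealInnerProductSpace

theorem nonneg_of_forall_mem_Ioc_nonneg_add_mul {A B : ℝ}
    (h : ∀ t ∈ Ioc (0 : ℝ) 1, 0 ≤ A + t * B) : 0 ≤ A := by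
  have hlim : Tendsto (fun t => A + t * B) (𝓝[>] 0) (𝓝 A) := by
    simpa using ((by fun_prop : Continuous fun t : ℝ => A + t * B).tendsto 0).mono_left
      nhdsWithin_le_nhds
  refine ge_of_tendsto hlim ?_
  filter_upwards [Ioc_mem_nhdsGT one_pos] with t ht using h t ht

theorem natCast_mul_le_mul_sub_of_le_mul_sub {δ a : ℕ → ℝ} {c : ℝ} (k : ℕ)
    (hanti : ∀ j < k, δ (j + 1) ≤ δ j) (hstep : ∀ j < k, δ (j + 1) ≤ c * (a j - a (j + 1))) :
    k * δ k ≤ c * (a 0 - a k) := by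
  induction k with
  | zero => simp
  | succ k ih =>
    have ih' := ih (fun j hj => hanti j (by omega)) (fun j hj => hstep j (by omega))
    have hk : (k : ℝ) * δ (k + 1) ≤ k * δ k :=
      mul_le_mul_of_nonneg_left (hanti k k.lt_succ_self) k.cast_nonneg
    push_cast
    linarith [hstep k k.lt_succ_self]

section InnerProductSpace

variable {E : Type*} [NormedAddCommGroup E] [InnerProductSpace ℝ E]

theorem ConvexOn.add_sq_norm_le_of_isMinOn {h : E → ℝ} (hh : ConvexOn ℝ univ h) (φ : ℝ)
    {c m : E} (hm : IsMinOn (fun b => h b + φ / 2 * ‖b - c‖ ^ 2) univ m) (b : E) :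
    h m + φ / 2 * ‖m - c‖ ^ 2 + φ / 2 * ‖b - m‖ ^ 2 ≤ h b + φ / 2 * ‖b - c‖ ^ 2 := by
  -- first-order optimality of `m` in the direction `b - m`, by comparing with `m + t • (b - m)`
  have hfirst : 0 ≤ h b - h m + φ * ⟪m - c, b - m⟫ := by
    refine nonneg_of_forall_mem_Ioc_nonneg_add_mul (B := φ / 2 * ‖b - m‖ ^ 2) ?_
    rintro t ⟨ht0, ht1⟩
    have hconv := hh.2 (mem_univ m) (mem_univ b) (sub_nonneg.2 ht1) ht0.le (sub_add_cancel 1 t)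
    have hmin := hm (mem_univ ((1 - t) • m + t • b))
    have hsplit : (1 - t) • m + t • b - c = (m - c) + t • (b - m) := by
      simp only [sub_smul, one_smul, smul_sub]; abel
    simp only [mem_ofPred_eq, hsplit, norm_add_sq_real, inner_smul_right, norm_smul,
      Real.norm_eq_abs, abs_of_pos ht0, smul_eq_mul] at hmin hconv
    refine nonneg_of_mul_nonneg_right ?_ ht0
    linear_combination hmin + hconv
  have hsplit : b - c = (m - c) + (b - m) := by abel
  rw [hsplit, norm_add_sq_real]
  linear_combination hfirst

theorem proximalGradient_step_le {L g : E → ℝ} {G x x' : E} (hL : ∀ b, L x + ⟪G, b - x⟫ ≤ L b)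
    (hg : ConvexOn ℝ univ g) (φ : ℝ)
    (hmin : IsMinOn (fun b => L x + ⟪G, b - x⟫ + φ / 2 * ‖b - x‖ ^ 2 + g b) univ x')
    (hmaj : L x' ≤ L x + ⟪G, x' - x⟫ + φ / 2 * ‖x' - x‖ ^ 2) (b : E) :
    L x' + g x' - (L b + g b) ≤ φ / 2 * (‖x - b‖ ^ 2 - ‖x' - b‖ ^ 2) := by
  have haffine : ConvexOn ℝ univ fun b => L x + ⟪G, b - x⟫ :=
    (((innerₛₗ ℝ G).convexOn convex_univ).add_const (L x - ⟪G, x⟫)).congr fun c _ => by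
      simp only [coe_innerₛₗ_apply, Pi.add_apply, inner_sub_right]; ring
  have hprox := (haffine.add hg).add_sq_norm_le_of_isMinOn φ (c := x) (m := x')
    (fun c hc => by simpa only [Pi.add_apply, add_right_comm] using hmin hc) b
  simp only [Pi.add_apply] at hprox
  rw [norm_sub_rev x, norm_sub_rev x']
  linarith [hL b]

end InnerProductSpace

theorem convexOn_sum_mul_abs {ι : Type*} [Fintype ι] {w : ι → ℝ} (hw : ∀ i, 0 ≤ w i) :
    ConvexOn ℝ univ fun v : EuclideanSpace ℝ ι => ∑ i, w i * |v i| := by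
  refine ⟨convex_univ, fun u _ v _ a b ha hb _ => ?_⟩
  simp only [PiLp.add_apply, PiLp.smul_apply, smul_eq_mul, Finset.mul_sum,
    ← Finset.sum_add_distrib]
  refine Finset.sum_le_sum fun i _ => ?_
  have habs : |a * u i + b * v i| ≤ a * |u i| + b * |v i| := by
    simpa only [abs_mul, abs_of_nonneg ha, abs_of_nonneg hb] using abs_add_le (a * u i) (b * v i)
  linarith [mul_le_mul_of_nonneg_left habs (hw i)]

-- `ℓ_τ(u) = max_{|s| ≤ τ} (s u - s² / 2)`, the maximum being attained at `s = ℓ'_τ(u)`.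
theorem mul_sub_sq_div_two_le_huber {τ s : ℝ} (hs : |s| ≤ τ) (u : ℝ) :
    s * u - s ^ 2 / 2 ≤ huber τ u := by
  unfold huber
  split_ifs with hu
  · nlinarith [sq_nonneg (u - s)]
  · have hsu : s * u ≤ |s| * |u| := (le_abs_self _).trans (abs_mul s u).le
    nlinarith [sq_abs s, mul_nonneg (sub_nonneg.2 hs) (sub_nonneg.2 (not_le.1 hu).le)]

theorem abs_huberDeriv_le {τ : ℝ} (hτ : 0 ≤ τ) (v : ℝ) : |huberDeriv τ v| ≤ τ := by
  unfold huberDeriv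
  split_ifs with hv
  · exact hv
  · rcases Real.sign_apply_eq v with h | h | h <;> simp [h, abs_of_nonneg hτ, hτ]

theorem huber_eq_huberDeriv_mul_sub {τ : ℝ} (hτ : 0 ≤ τ) (v : ℝ) :
    huber τ v = huberDeriv τ v * v - huberDeriv τ v ^ 2 / 2 := by
  unfold huber huberDeriv
  split_ifs with hv
  · ring
  · rcases lt_trichotomy v 0 with h | rfl | h
    · rw [Real.sign_of_neg h, abs_of_neg h]; ring
    · exact absurd (by simpa using hτ) hv
    · rw [Real.sign_of_pos h, abs_of_pos h]; ring

theorem huber_add_huberDeriv_mul_sub_le {τ : ℝ} (hτ : 0 ≤ τ) (v u : ℝ) :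
    huber τ v + huberDeriv τ v * (u - v) ≤ huber τ u := by
  rw [huber_eq_huberDeriv_mul_sub hτ]
  linarith [mul_sub_sq_div_two_le_huber (abs_huberDeriv_le hτ v) u]

theorem empLoss_add_sum_empGrad_mul_sub_le {n d : ℕ} (y : Fin n → ℝ) (X : Fin n → Fin d → ℝ)
    {τ : ℝ} (hτ : 0 ≤ τ) (a b : Fin d → ℝ) :
    empLoss y X τ a + ∑ j, empGrad y X τ a j * (b j - a j) ≤ empLoss y X τ b := by
  set r : (Fin d → ℝ) → Fin n → ℝ := fun c i => y i - ∑ j, X i j * c j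
  have hgrad : ∑ j, empGrad y X τ a j * (b j - a j)
      = (n : ℝ)⁻¹ * ∑ i, huberDeriv τ (r a i) * (r b i - r a i) := by
    have hres : ∀ i, r b i - r a i = ∑ j, X i j * (a j - b j) := fun i => by
      simp only [r, mul_sub, Finset.sum_sub_distrib, sub_sub_sub_cancel_left]
    simp only [hres, empGrad, Finset.mul_sum, Finset.sum_mul]
    rw [Finset.sum_comm]
    exact Finset.sum_congr rfl fun i _ => Finset.sum_congr rfl fun j _ => by ring
  rw [hgrad, empLoss, empLoss, ← mul_add, ← Finset.sum_add_distrib]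
  gcongr with i
  exact huber_add_huberDeriv_mul_sub_le hτ _ _

theorem norm2_sub_eq_norm_toLp_sub {d : ℕ} (u v : Fin d → ℝ) :
    norm2 (fun i => u i - v i) = ‖WithLp.toLp 2 u - WithLp.toLp 2 v‖ := by
  simp [norm2, EuclideanSpace.norm_eq]

theorem inner_toLp_eq_sum_mul {d : ℕ} (u v : Fin d → ℝ) :
    ⟪WithLp.toLp 2 u, WithLp.toLp 2 v⟫ = ∑ j, u j * v j := by
  simp [PiLp.inner_apply, mul_comm]

theorem Fmaj_eq_inner {n d : ℕ} (y : Fin n → ℝ) (X : Fin n → Fin d → ℝ) (τ φ : ℝ)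
    (x b : Fin d → ℝ) :
    Fmaj y X τ φ x b = empLoss y X τ x +
      ⟪WithLp.toLp 2 (empGrad y X τ x), WithLp.toLp 2 b - WithLp.toLp 2 x⟫ +
        φ / 2 * ‖WithLp.toLp 2 b - WithLp.toLp 2 x‖ ^ 2 := by
  rw [Fmaj, norm2_sub_eq_norm_toLp_sub, ← WithLp.toLp_sub, inner_toLp_eq_sum_mul]
  rfl

theorem Psi_sub_le_of_Fmaj_step {n d : ℕ} (y : Fin n → ℝ) (X : Fin n → Fin d → ℝ) {τ : ℝ}
    (hτ : 0 ≤ τ) {lam : Fin d → ℝ} (hlam : ∀ j, 0 ≤ lam j) (φ : ℝ) {x x' : Fin d → ℝ}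
    (hmin : ∀ b : Fin d → ℝ, Fmaj y X τ φ x x' + ∑ i, lam i * |x' i| ≤
      Fmaj y X τ φ x b + ∑ i, lam i * |b i|)
    (hmaj : empLoss y X τ x' ≤ Fmaj y X τ φ x x') (b : Fin d → ℝ) :
    Psi y X τ lam x' - Psi y X τ lam b ≤
      φ / 2 * (norm2 (fun i => x i - b i) ^ 2 - norm2 (fun i => x' i - b i) ^ 2) := by
  have hsubgrad (c : EuclideanSpace ℝ (Fin d)) : empLoss y X τ x +
      ⟪WithLp.toLp 2 (empGrad y X τ x), c - WithLp.toLp 2 x⟫ ≤ empLoss y X τ c.ofLp := by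
    obtain ⟨c, rfl⟩ := WithLp.toLp_surjective 2 c
    rw [← WithLp.toLp_sub, inner_toLp_eq_sum_mul]
    exact empLoss_add_sum_empGrad_mul_sub_le y X hτ x c
  have hprox : IsMinOn (fun c : EuclideanSpace ℝ (Fin d) => empLoss y X τ x +
      ⟪WithLp.toLp 2 (empGrad y X τ x), c - WithLp.toLp 2 x⟫ +
        φ / 2 * ‖c - WithLp.toLp 2 x‖ ^ 2 + ∑ i, lam i * |c i|) univ (WithLp.toLp 2 x') := by
    intro c _
    obtain ⟨c, rfl⟩ := WithLp.toLp_surjective 2 c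
    simpa only [mem_ofPred_eq, Fmaj_eq_inner] using hmin c
  have hdescent := proximalGradient_step_le (L := fun c => empLoss y X τ c.ofLp)
    (g := fun c : EuclideanSpace ℝ (Fin d) => ∑ i, lam i * |c i|) hsubgrad
    (convexOn_sum_mul_abs hlam) φ hprox (by rw [Fmaj_eq_inner] at hmaj; exact hmaj)
    (WithLp.toLp 2 b)
  rw [Psi, Psi, norm2_sub_eq_norm_toLp_sub, norm2_sub_eq_norm_toLp_sub]
  exact hdescent

theorem Psi_le_of_Fmaj_step {n d : ℕ} (y : Fin n → ℝ) (X : Fin n → Fin d → ℝ) {τ : ℝ}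
    (hτ : 0 ≤ τ) {lam : Fin d → ℝ} (hlam : ∀ j, 0 ≤ lam j) {φ : ℝ} (hφ : 0 ≤ φ)
    {x x' : Fin d → ℝ}
    (hmin : ∀ b : Fin d → ℝ, Fmaj y X τ φ x x' + ∑ i, lam i * |x' i| ≤
      Fmaj y X τ φ x b + ∑ i, lam i * |b i|)
    (hmaj : empLoss y X τ x' ≤ Fmaj y X τ φ x x') :
    Psi y X τ lam x' ≤ Psi y X τ lam x := by
  have hdescent := Psi_sub_le_of_Fmaj_step y X hτ hlam φ hmin hmaj x
  have hself : norm2 (fun i => x i - x i) = 0 := by simp [norm2]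
  have hdist : 0 ≤ φ / 2 * norm2 (fun i => x' i - x i) ^ 2 := by positivity
  rw [hself] at hdescent
  linarith

/-- Lemma C.3: sublinear convergence of the LAMM iterates for
the penalized empirical Huber loss. -/
theorem statement_14 {n d : ℕ} (y : Fin n → ℝ) (X : Fin n → Fin d → ℝ)
    (τ : ℝ) (hτ : 0 < τ)
    (lam : Fin d → ℝ) (hlam : ∀ j, 0 ≤ lam j)
    (β : ℕ → Fin d → ℝ) (φ : ℕ → ℝ) (k : ℕ) (hk : 1 ≤ k)
    (hφ : ∀ j, 1 ≤ j → j ≤ k → 0 < φ j)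
    (hmin : ∀ j, 1 ≤ j → j ≤ k → ∀ b : Fin d → ℝ,
      Fmaj y X τ (φ j) (β (j - 1)) (β j) + ∑ i, lam i * |β j i| ≤
        Fmaj y X τ (φ j) (β (j - 1)) b + ∑ i, lam i * |b i|)
    (hmaj : ∀ j, 1 ≤ j → j ≤ k →
      empLoss y X τ (β j) ≤ Fmaj y X τ (φ j) (β (j - 1)) (β j))
    (βh : Fin d → ℝ)
    (hβh : ∀ b : Fin d → ℝ, Psi y X τ lam βh ≤ Psi y X τ lam b) :
    Psi y X τ lam (β k) - Psi y X τ lam βh ≤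
      (Finset.Icc 1 k).sup' (Finset.nonempty_Icc.mpr hk) φ / (2 * k) *
        (norm2 (fun i => β 0 i - βh i)) ^ 2 := by
  set M := (Finset.Icc 1 k).sup' (Finset.nonempty_Icc.mpr hk) φ
  set a : ℕ → ℝ := fun j => norm2 (fun i => β j i - βh i) ^ 2
  set δ : ℕ → ℝ := fun j => Psi y X τ lam (β j) - Psi y X τ lam βh
  have hφ' (j : ℕ) (hj : j < k) : 0 < φ (j + 1) := hφ (j + 1) (by omega) hj
  have hφM (j : ℕ) (hj : j < k) : φ (j + 1) ≤ M :=
    Finset.le_sup' φ (Finset.mem_Icc.2 ⟨by omega, hj⟩)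
  have hδ (j : ℕ) : 0 ≤ δ j := sub_nonneg.2 (hβh _)
  have hanti (j : ℕ) (hj : j < k) : δ (j + 1) ≤ δ j :=
    sub_le_sub_right (Psi_le_of_Fmaj_step y X hτ.le hlam (hφ' j hj).le
      (hmin (j + 1) (by omega) hj) (hmaj (j + 1) (by omega) hj)) _
  have hstep (j : ℕ) (hj : j < k) : δ (j + 1) ≤ M / 2 * (a j - a (j + 1)) := by
    have hdescent : δ (j + 1) ≤ φ (j + 1) / 2 * (a j - a (j + 1)) :=
      Psi_sub_le_of_Fmaj_step y X hτ.le hlam _ (hmin (j + 1) (by omega) hj)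
        (hmaj (j + 1) (by omega) hj) βh
    have hdiff : 0 ≤ a j - a (j + 1) :=
      nonneg_of_mul_nonneg_right ((hδ _).trans hdescent) (half_pos (hφ' j hj))
    exact hdescent.trans (by gcongr; exact hφM j hj)
  have hrate := natCast_mul_le_mul_sub_of_le_mul_sub k hanti hstep
  have hak : 0 ≤ M * a k := mul_nonneg ((hφ' 0 hk).le.trans (hφM 0 hk)) (sq_nonneg _)
  rw [div_mul_eq_mul_div, le_div_iff₀ (by positivity)]
  change δ k * (2 * k) ≤ M * a 0
  linarith
end
end
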